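/- arXiv:1908.00217 — 2 statements merged into one kernel-verified Lean document; each statement's English description precedes it below -/
import Mathlib

section
/- Let {z_n} be a sequence of distinct nonzero complex numbers of finite genus p ≥ 0, and let f(z) = ∏_{n=1}^∞ (1 − z/z_n) e_p(z/z_n) be the associated canonical product (which has simple zeros at the z_n). Then for every k, −f''(z_k)/f'(z_k) = −2p/z_k + 2 Σ_{n≠k} (z_k/z_n)^p · 1/(z_n − z_k). -/
/-!
Write `E_p(u) = (1 - u) e_p(u)`. Since `E_p'(u) = -u^p e_p(u)` and, by the Taylor bound for
`log (1 - u)`, `‖E_p(u) - 1‖ ≤ 4‖u‖^(p+1)` for `‖u‖ ≤ 1/2`, the product converges locally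
uniformly. Replacing the `k`-th factor `E_p(w/z_k)` by `-e_p(w/z_k)/z_k` gives
`f(w) = (w - z_k) G(w)` with `G` entire, again a locally uniformly convergent product, and
`G(z_k) ≠ 0`. Then `f'(z_k) = G(z_k)` and `f''(z_k) = 2G'(z_k)`, so `-f''/f'` at `z_k` is `-2`
times the logarithmic derivative of `G`, i.e. the sum of those of its factors: `p/z_k` for the
modified factor and `-(z_k/z_n)^p/(z_n - z_k)` for the others.
-/

/-- Weierstrass convergence factor: e_0(z) = 1 and e_p(z) = exp(∑_{j=1}^p z^j/j). -/
noncomputable def weierE (p : ℕ) (z : ℂ) : ℂ :=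
  Complex.exp (∑ j ∈ Finset.range p, z ^ (j + 1) / (j + 1))

open Complex Filter

theorem HasProd.of_update_mul {ι α : Type*} [CommMonoid α] [TopologicalSpace α]
    [ContinuousMul α] [DecidableEq ι] {f : ι → α} {k : ι} {a c P : α}
    (h : HasProd (Function.update f k a) P) (hk : f k = c * a) : HasProd f (c * P) := by
  convert (hasProd_pi_single k c).mul h using 1
  funext i
  rcases eq_or_ne i k with rfl | hik
  · simp [hk]
  · simp [hik]

theorem HasSum.eq_add_tsum_ne {ι α : Type*} [AddCommGroup α] [TopologicalSpace α]
    [IsTopologicalAddGroup α] [T2Space α] {f : ι → α} {S : α} (h : HasSum f S) (k : ι) :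
    S = f k + ∑' i : {i // i ≠ k}, f i :=
  eq_add_of_sub_eq' ((hasSum_singleton k f).hasSum_iff_compl.mp h).tsum_eq.symm

theorem hasSum_logDeriv_of_hasProdLocallyUniformlyOn {ι : Type*} {s : Set ℂ} (hs : IsOpen s)
    {x : ℂ} (hx : x ∈ s) {f : ι → ℂ → ℂ} {g : ℂ → ℂ} (hf : ∀ i, f i x ≠ 0)
    (hd : ∀ i, DifferentiableOn ℂ (f i) s) (hfg : HasProdLocallyUniformlyOn f g s)
    (hg : g x ≠ 0) : HasSum (fun i => logDeriv (f i) x) (logDeriv g x) := by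
  refine (logDeriv_tendsto hs hx hfg (.of_forall fun t => ?_) hg).congr fun t => ?_
  · exact DifferentiableOn.fun_finsetProd fun i _ => hd i
  · exact logDeriv_prod (fun i _ => hf i)
      fun i _ => (hd i x hx).differentiableAt (hs.mem_nhds hx)

lemma deriv_sub_const_mul {G : ℂ → ℂ} (hG : Differentiable ℂ G) (a w : ℂ) :
    deriv (fun v => (v - a) * G v) w = G w + (w - a) * deriv G w := by
  rw [(((hasDerivAt_id' w).sub_const a).fun_mul (hG w).hasDerivAt).deriv, one_mul]

lemma deriv_deriv_sub_const_mul_self {G : ℂ → ℂ} (hG : Differentiable ℂ G) (a : ℂ) :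
    deriv (deriv fun v => (v - a) * G v) a = 2 * deriv G a := by
  have hG' : DifferentiableAt ℂ (deriv G) a := (hG.analyticAt a).deriv.differentiableAt
  rw [funext (deriv_sub_const_mul hG a),
    ((hG a).hasDerivAt.fun_add (((hasDerivAt_id' a).sub_const a).fun_mul hG'.hasDerivAt)).deriv]
  simp only [sub_self, zero_mul, one_mul, add_zero]
  ring

def SummableSubOneOnBalls {ι : Type*} (F : ι → ℂ → ℂ) : Prop :=
  ∀ R : ℝ, ∃ u : ι → ℝ, Summable u ∧
    ∀ᶠ i in cofinite, ∀ w, ‖w‖ ≤ R → ‖F i w - 1‖ ≤ u i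

namespace SummableSubOneOnBalls

variable {ι : Type*} {F : ι → ℂ → ℂ}

lemma hasProdLocallyUniformlyOn (hF : SummableSubOneOnBalls F) (hc : ∀ i, Continuous (F i)) :
    HasProdLocallyUniformlyOn F (fun w => ∏' i, F i w) Set.univ := by
  refine hasProdLocallyUniformlyOn_of_forall_compact isOpen_univ fun K _ hK => ?_
  obtain ⟨R, hKR⟩ := hK.isBounded.subset_closedBall 0
  obtain ⟨u, hu, hbound⟩ := hF R
  have h := Summable.hasProdUniformlyOn_one_add (f := fun i w => F i w - 1) hK hu
    (hbound.mono fun i hi w hw => hi w (by simpa using hKR hw))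
    fun i => ((hc i).sub continuous_const).continuousOn
  simpa only [add_sub_cancel] using h

lemma differentiable_tprod (hF : SummableSubOneOnBalls F) (hd : ∀ i, Differentiable ℂ (F i)) :
    Differentiable ℂ fun w => ∏' i, F i w :=
  differentiableOn_univ.1 <| (hF.hasProdLocallyUniformlyOn fun i => (hd i).continuous)
    |>.differentiableOn (.of_forall fun _ => .fun_finsetProd fun i _ => (hd i).differentiableOn)
      isOpen_univ

lemma tprod_ne_zero (hF : SummableSubOneOnBalls F) {w : ℂ} (hw : ∀ i, F i w ≠ 0) :
    ∏' i, F i w ≠ 0 := by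
  obtain ⟨u, hu, hbound⟩ := hF ‖w‖
  have h := tprod_one_add_ne_zero_of_summable (f := fun i => F i w - 1)
    (by simpa only [add_sub_cancel] using hw)
    (hu.of_norm_bounded_eventually (hbound.mono fun i hi => by simpa using hi w le_rfl))
  simpa only [add_sub_cancel] using h

lemma update [DecidableEq ι] (hF : SummableSubOneOnBalls F) (k : ι) (g : ℂ → ℂ) :
    SummableSubOneOnBalls (Function.update F k g) := by
  intro R
  obtain ⟨u, hu, hbound⟩ := hF R
  refine ⟨u, hu, ?_⟩
  filter_upwards [hbound, eventually_cofinite_ne k] with i hi hik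
  simpa [Function.update_of_ne hik] using hi

end SummableSubOneOnBalls

noncomputable def primaryFactor (p : ℕ) (u : ℂ) : ℂ := (1 - u) * weierE p u

lemma weierE_ne_zero (p : ℕ) (u : ℂ) : weierE p u ≠ 0 := exp_ne_zero _

lemma primaryFactor_ne_zero (p : ℕ) {u : ℂ} (hu : u ≠ 1) : primaryFactor p u ≠ 0 :=
  mul_ne_zero (sub_ne_zero.2 hu.symm) (weierE_ne_zero p u)

lemma weierE_eq_exp_neg_logTaylor (p : ℕ) (u : ℂ) :
    weierE p u = cexp (-logTaylor (p + 1) (-u)) := by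
  rw [weierE, logTaylor, Finset.sum_range_succ']
  congr 1
  simp only [CharP.cast_eq_zero, div_zero, add_zero, Nat.cast_add, Nat.cast_one,
    ← Finset.sum_neg_distrib]
  refine Finset.sum_congr rfl fun j _ => ?_
  rw [neg_pow u, pow_succ (-1 : ℂ) (j + 1)]
  ring_nf
  rw [pow_mul', neg_one_sq, one_pow, mul_one]

lemma norm_primaryFactor_sub_one_le (p : ℕ) {u : ℂ} (hu : ‖u‖ ≤ 1 / 2) :
    ‖primaryFactor p u - 1‖ ≤ 4 * ‖u‖ ^ (p + 1) := by
  have hu1 : ‖-u‖ < 1 := by rw [norm_neg]; linarith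
  have hexp : primaryFactor p u = cexp (log (1 + -u) - logTaylor (p + 1) (-u)) := by
    have h : (1 : ℂ) + -u ≠ 0 := by
      intro h0
      have : ‖(1 : ℂ)‖ ≤ 1 / 2 := by simpa [show (1 : ℂ) = u by linear_combination h0] using hu
      norm_num at this
    rw [primaryFactor, weierE_eq_exp_neg_logTaylor, sub_eq_add_neg (log _), exp_add, exp_log h,
      ← sub_eq_add_neg]
  have hpow : ‖u‖ ^ (p + 1) ≤ 1 / 2 :=
    (pow_le_of_le_one (norm_nonneg u) (by linarith) (by omega)).trans hu
  have hlog : ‖log (1 + -u) - logTaylor (p + 1) (-u)‖ ≤ 2 * ‖u‖ ^ (p + 1) := by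
    refine (norm_log_sub_logTaylor_le p hu1).trans ?_
    rw [norm_neg]
    have h2 : (1 - ‖u‖)⁻¹ ≤ 2 := by
      rw [inv_le_comm₀ (by linarith) two_pos]; linarith
    have h3 : (1 : ℝ) ≤ p + 1 := by linarith [(Nat.cast_nonneg p : (0 : ℝ) ≤ p)]
    calc ‖u‖ ^ (p + 1) * (1 - ‖u‖)⁻¹ / (p + 1) ≤ ‖u‖ ^ (p + 1) * (1 - ‖u‖)⁻¹ :=
          div_le_self (mul_nonneg (by positivity) (inv_nonneg.2 (by linarith))) h3
      _ ≤ ‖u‖ ^ (p + 1) * 2 := by gcongr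
      _ = 2 * ‖u‖ ^ (p + 1) := mul_comm _ _
  calc ‖primaryFactor p u - 1‖ ≤ 2 * ‖log (1 + -u) - logTaylor (p + 1) (-u)‖ :=
        hexp ▸ norm_exp_sub_one_le (by linarith)
    _ ≤ 4 * ‖u‖ ^ (p + 1) := by linarith

lemma summableSubOneOnBalls_primaryFactor {ι : Type*} {z : ι → ℂ} {p : ℕ}
    (hp : Summable fun n => ‖z n‖⁻¹ ^ (p + 1)) :
    SummableSubOneOnBalls fun n w => primaryFactor p (w / z n) := by
  intro R
  refine ⟨fun n => 4 * R ^ (p + 1) * ‖z n‖⁻¹ ^ (p + 1), hp.mul_left _, ?_⟩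
  set ε := (2 * (|R| + 1))⁻¹
  have hε : 0 < ε := by positivity
  filter_upwards [hp.tendsto_cofinite_zero.eventually_lt_const (pow_pos hε (p + 1))]
    with n hn w hw
  have hzn : ‖z n‖⁻¹ < ε := (pow_lt_pow_iff_left₀ (by positivity) hε.le (by omega)).1 hn
  have hR : 0 ≤ R := (norm_nonneg w).trans hw
  have hwz : ‖w / z n‖ ≤ R * ‖z n‖⁻¹ := by
    rw [norm_div, div_eq_mul_inv]; gcongr
  have hhalf : R * ‖z n‖⁻¹ ≤ 1 / 2 := by
    calc R * ‖z n‖⁻¹ ≤ (|R| + 1) * ε := by gcongr; linarith [le_abs_self R]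
      _ = 1 / 2 := by simp only [ε]; field_simp
  calc ‖primaryFactor p (w / z n) - 1‖ ≤ 4 * ‖w / z n‖ ^ (p + 1) :=
        norm_primaryFactor_sub_one_le p (hwz.trans hhalf)
    _ ≤ 4 * (R * ‖z n‖⁻¹) ^ (p + 1) := by gcongr
    _ = 4 * R ^ (p + 1) * ‖z n‖⁻¹ ^ (p + 1) := by rw [mul_pow, mul_assoc]

lemma hasDerivAt_weierE (p : ℕ) (u : ℂ) :
    HasDerivAt (weierE p) ((∑ j ∈ Finset.range p, u ^ j) * weierE p u) u := by
  have h : HasDerivAt (fun v : ℂ => ∑ j ∈ Finset.range p, v ^ (j + 1) / (j + 1))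
      (∑ j ∈ Finset.range p, u ^ j) u := by
    refine HasDerivAt.fun_sum fun j _ => ?_
    refine ((hasDerivAt_pow (j + 1) u).div_const ((j : ℂ) + 1)).congr_deriv ?_
    rw [Nat.add_sub_cancel]
    push_cast
    field_simp
  rw [mul_comm]
  exact h.cexp

lemma hasDerivAt_primaryFactor (p : ℕ) (u : ℂ) :
    HasDerivAt (primaryFactor p) (-(u ^ p * weierE p u)) u := by
  refine (((hasDerivAt_id u).const_sub 1).mul (hasDerivAt_weierE p u)).congr_deriv ?_
  rw [id, ← mul_assoc, mul_neg_geom_sum]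
  ring

lemma hasDerivAt_weierE_div (p : ℕ) (a w : ℂ) :
    HasDerivAt (fun v => weierE p (v / a))
      ((∑ j ∈ Finset.range p, (w / a) ^ j) * weierE p (w / a) / a) w := by
  have h := (hasDerivAt_weierE p (w / a)).comp w ((hasDerivAt_id' w).div_const a)
  exact h.congr_deriv (mul_one_div _ _)

lemma hasDerivAt_primaryFactor_div (p : ℕ) (a w : ℂ) :
    HasDerivAt (fun v => primaryFactor p (v / a)) (-((w / a) ^ p * weierE p (w / a)) / a) w := by
  have h := (hasDerivAt_primaryFactor p (w / a)).comp w ((hasDerivAt_id' w).div_const a)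
  exact h.congr_deriv (mul_one_div _ _)

lemma logDeriv_weierE_div_self (p : ℕ) {a : ℂ} (ha : a ≠ 0) :
    logDeriv (fun w => weierE p (w / a)) a = p / a := by
  rw [logDeriv_apply, (hasDerivAt_weierE_div p a a).deriv, div_self ha]
  simp only [one_pow, Finset.sum_const, Finset.card_range, nsmul_eq_mul, mul_one]
  field_simp [weierE_ne_zero]

lemma logDeriv_primaryFactor_div (p : ℕ) {a b : ℂ} (ha : a ≠ 0) (hb : b ≠ a) :
    logDeriv (fun w => primaryFactor p (w / a)) b = -((b / a) ^ p * (a - b)⁻¹) := by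
  have hab : a - b ≠ 0 := sub_ne_zero.2 hb.symm
  rw [logDeriv_apply, (hasDerivAt_primaryFactor_div p a b).deriv, primaryFactor]
  field_simp [weierE_ne_zero]

noncomputable def deflatedFactors {ι : Type*} [DecidableEq ι] (z : ι → ℂ) (p : ℕ) (k : ι) :
    ι → ℂ → ℂ :=
  Function.update (fun n w => primaryFactor p (w / z n)) k fun w => -(z k)⁻¹ * weierE p (w / z k)

section deflatedFactors

variable {ι : Type*} [DecidableEq ι] {z : ι → ℂ} (p : ℕ) {k : ι}

lemma differentiable_deflatedFactors (n : ι) : Differentiable ℂ (deflatedFactors z p k n) := by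
  rcases eq_or_ne n k with rfl | hn
  · rw [deflatedFactors, Function.update_self]
    exact fun w => ((hasDerivAt_weierE_div p (z n) w).const_mul _).differentiableAt
  · rw [deflatedFactors, Function.update_of_ne hn]
    exact fun w => (hasDerivAt_primaryFactor_div p (z n) w).differentiableAt

lemma deflatedFactors_ne_zero (hzk : z k ≠ 0) (hz : ∀ n ≠ k, z n ≠ z k) (n : ι) :
    deflatedFactors z p k n (z k) ≠ 0 := by
  rcases eq_or_ne n k with rfl | hn
  · simpa [deflatedFactors] using ⟨hzk, weierE_ne_zero _ _⟩
  · have hkn : z k / z n ≠ 1 := fun h => by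
      have hzn : z n ≠ 0 := by rintro h0; simp [h0] at h
      exact hz n hn ((div_eq_one_iff_eq hzn).1 h).symm
    simpa [deflatedFactors, hn] using primaryFactor_ne_zero p hkn

lemma hasProd_primaryFactor_of_hasProd_deflatedFactors (hzk : z k ≠ 0) {w P : ℂ}
    (h : HasProd (fun n => deflatedFactors z p k n w) P) :
    HasProd (fun n => primaryFactor p (w / z n)) ((w - z k) * P) := by
  have hk : primaryFactor p (w / z k) = (w - z k) * deflatedFactors z p k k w := by
    simp only [deflatedFactors, Function.update_self, primaryFactor]
    field_simp
    ring
  refine HasProd.of_update_mul ?_ hk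
  convert h using 1
  funext n
  rcases eq_or_ne n k with rfl | hn <;> simp [deflatedFactors, *]

lemma logDeriv_deflatedFactors_self (hzk : z k ≠ 0) :
    logDeriv (deflatedFactors z p k k) (z k) = p / z k := by
  rw [deflatedFactors, Function.update_self]
  exact (logDeriv_const_mul _ _ (neg_ne_zero.2 (inv_ne_zero hzk))).trans
    (logDeriv_weierE_div_self p hzk)

lemma logDeriv_deflatedFactors_of_ne {n : ι} (hn : n ≠ k) (hzn : z n ≠ 0) (hz : z k ≠ z n) :
    logDeriv (deflatedFactors z p k n) (z k) = -((z k / z n) ^ p * (z n - z k)⁻¹) := by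
  simpa [deflatedFactors, hn] using logDeriv_primaryFactor_div p hzn hz

end deflatedFactors

theorem stmt15_general (z : ℕ → ℂ) (hz0 : ∀ n, z n ≠ 0) (hzinj : Function.Injective z)
    (p : ℕ) (hp : Summable fun n : ℕ => (‖z n‖)⁻¹ ^ (p + 1))
    (f : ℂ → ℂ) (hf : ∀ w : ℂ, f w = ∏' n : ℕ, ((1 - w / z n) * weierE p (w / z n))) :
    ∀ k : ℕ, -(deriv (deriv f) (z k)) / deriv f (z k) =
      -(2 * (p : ℂ)) / z k +
        2 * ∑' n : {n : ℕ // n ≠ k}, (z k / z (n : ℕ)) ^ p * (z (n : ℕ) - z k)⁻¹ := by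
  intro k
  have hM : SummableSubOneOnBalls (deflatedFactors z p k) :=
    (summableSubOneOnBalls_primaryFactor hp).update k _
  have hd : ∀ n, Differentiable ℂ (deflatedFactors z p k n) := differentiable_deflatedFactors p
  have hprod := hM.hasProdLocallyUniformlyOn fun n => (hd n).continuous
  set G := fun w => ∏' n, deflatedFactors z p k n w
  have hG : Differentiable ℂ G := hM.differentiable_tprod hd
  have hfG : f = fun w => (w - z k) * G w := funext fun w =>
    (hf w).trans (hasProd_primaryFactor_of_hasProd_deflatedFactors p (hz0 k)
      (hprod.hasProd (Set.mem_univ w))).tprod_eq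
  have hne := deflatedFactors_ne_zero p (hz0 k) fun n hn h => hn (hzinj h)
  have hlog := hasSum_logDeriv_of_hasProdLocallyUniformlyOn isOpen_univ (Set.mem_univ (z k)) hne
    (fun n => (hd n).differentiableOn) hprod (hM.tprod_ne_zero hne)
  have hsplit := hlog.eq_add_tsum_ne k
  rw [logDeriv_deflatedFactors_self p (hz0 k), tsum_congr fun n : {n // n ≠ k} =>
    logDeriv_deflatedFactors_of_ne p n.2 (hz0 n) fun h => n.2 (hzinj h).symm, tsum_neg] at hsplit
  rw [hfG, deriv_deriv_sub_const_mul_self hG, deriv_sub_const_mul hG, sub_self, zero_mul,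
    add_zero, neg_div, mul_div_assoc, ← logDeriv_apply, hsplit]
  ring

/-- Formula (5.3): for a canonical product f of genus p with (distinct, nonzero) zeros z_n,
−f''(z_k)/f'(z_k) = −2p/z_k + 2 Σ_{n≠k} (z_k/z_n)^p / (z_n − z_k). -/
theorem stmt15 (z : ℕ → ℂ) (hz0 : ∀ n, z n ≠ 0) (hzinj : Function.Injective z)
    (hdiscr : ∀ r : ℝ, {n : ℕ | ‖z n‖ ≤ r}.Finite)
    (p : ℕ) (hp : Summable fun n : ℕ => (‖z n‖)⁻¹ ^ (p + 1))
    (hp' : ¬ Summable fun n : ℕ => (‖z n‖)⁻¹ ^ p)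
    (f : ℂ → ℂ) (hf : ∀ w : ℂ, f w = ∏' n : ℕ, ((1 - w / z n) * weierE p (w / z n))) :
    ∀ k : ℕ, -(deriv (deriv f) (z k)) / deriv f (z k) =
      -(2 * (p : ℂ)) / z k +
        2 * ∑' n : {n : ℕ // n ≠ k}, (z k / z (n : ℕ)) ^ p * (z (n : ℕ) - z k)⁻¹ :=
  stmt15_general z hz0 hzinj p hp f hf
end

section
/- Fix q > 0 and define z_n = 2^n, ε_n = min{1/2, 2^n exp(−(n log 2)^q)}, and w_n = z_n + ε_n for n ≥ 1. Then the combined sequence {z_n} ∪ {w_n} has logarithmic exponent of convergence equal to one and is uniformly logarithmically q-separated. -/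
open Filter

/-- A sequence of genus p is uniformly logarithmically q-separated (with constant C > 0) if
inf_k e^{C(log(1+|z_k|))^q} ∏_{n≠k} |1 - z_k/z_n| |e_p(z_k/z_n)| > 0. -/
def UnifLogQSep (z : ℕ → ℂ) (p : ℕ) (q C : ℝ) : Prop :=
  ∃ ε > 0, ∀ k : ℕ,
    ε ≤ Real.exp (C * Real.log (1 + ‖z k‖) ^ q) *
      ∏' n : {n : ℕ // n ≠ k},
        (‖1 - z k / z (n : ℕ)‖ * ‖weierE p (z k / z (n : ℕ))‖)

/-- Counting function of a sequence: number of its points in |z| < r. -/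
noncomputable def countFn (z : ℕ → ℂ) (r : ℝ) : ℕ :=
  Nat.card {n : ℕ | ‖z n‖ < r}

/-- Logarithmic exponent of convergence λ_log = limsup_{r→∞} log n(r)/log log r. -/
noncomputable def logExpConv (z : ℕ → ℂ) : EReal :=
  Filter.limsup
    (fun r : ℝ => ((Real.log (countFn z r) / Real.log (Real.log r) : ℝ) : EReal)) Filter.atTop

open Finset Real Topology

/-! The moduli satisfy `2 ^ (n / 2 + 1) ≤ |ζ n| ≤ 2 ^ (n / 2 + 2)`, so the counting function
is comparable to `log r` and `λ_log = 1`.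

For the separation at `ζ k`, let `j = k / 2` be the index of its pair. Each of the `2 j` points
of the lower pairs gives a factor at least `2 ^ (j - n / 2) / 4`, for a product
`2 ^ (j (j + 1) - 4 j)`; the other point of the pair gives `ε_{j+1} / 2 ^ (j + 2)`; the points
of the higher pairs have ratios `ζ k / ζ n` decaying geometrically, so by
`1 - t ≥ exp (-3 t)` their product is at least `exp (-8)`. The weight satisfies
`exp (log (1 + |ζ k|) ^ q) * ε_{j+1} ≥ 1 / 2`, and the quadratic exponent of the lower product
absorbs the remaining `2 ^ (j + 3)`, which leaves `exp (-8) / 128` as a uniform lower bound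
with `C = 1`. -/

theorem sum_range_two_mul_comp_div_two {M : Type*} [AddCommMonoid M] (f : ℕ → M) (m : ℕ) :
    ∑ n ∈ range (2 * m), f (n / 2) = 2 • ∑ j ∈ range m, f j := by
  induction m with
  | zero => simp
  | succ m ih =>
    rw [show 2 * (m + 1) = 2 * m + 1 + 1 by ring, sum_range_succ, sum_range_succ, ih,
      sum_range_succ, show (2 * m + 1) / 2 = m by omega, show 2 * m / 2 = m by omega, smul_add,
      two_nsmul (f m), add_assoc]

theorem sum_range_sub_mul_two (m : ℕ) : (∑ i ∈ range m, (m - i)) * 2 = m * (m + 1) := by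
  rw [← sum_range_reflect, sum_congr rfl fun i hi => show m - (m - 1 - i) = i + 1 by
    simp only [mem_range] at hi; omega]
  have := sum_range_id_mul_two (m + 1)
  rw [sum_range_succ'] at this
  simpa [mul_comm] using this

theorem sum_range_half_pow_div_two_le (M : ℕ) : ∑ i ∈ range M, (1 / 2 : ℝ) ^ (i / 2) ≤ 4 :=
  calc ∑ i ∈ range M, (1 / 2 : ℝ) ^ (i / 2)
      ≤ ∑ i ∈ range (2 * M), (1 / 2 : ℝ) ^ (i / 2) :=
        sum_le_sum_of_subset_of_nonneg (range_subset_range.2 (by omega))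
          fun _ _ _ => by positivity
    _ = 2 * ∑ j ∈ range M, (1 / 2 : ℝ) ^ j := by
        rw [sum_range_two_mul_comp_div_two, nsmul_eq_mul, Nat.cast_ofNat]
    _ ≤ 4 := by linarith [sum_geometric_two_le M]

theorem exp_neg_three_mul_le_one_sub {t : ℝ} (ht₀ : 0 ≤ t) (ht : t ≤ 2 / 3) :
    exp (-(3 * t)) ≤ 1 - t := by
  have hpos : 0 < 1 - t := by linarith
  have hinv : (1 - t)⁻¹ ≤ 1 + 3 * t := by
    rw [inv_le_iff_one_le_mul₀ hpos]
    nlinarith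
  rw [← exp_log hpos, exp_le_exp]
  linarith [one_sub_inv_le_log_of_pos hpos]

-- `min δ 1` covers the junk value `∏' n, f n = 1` of a non-multipliable `f`.
theorem min_le_tprod_of_le_prod_range {f : ℕ → ℝ} {δ : ℝ} {N : ℕ}
    (h : ∀ M, δ ≤ ∏ n ∈ range (N + M), f n) : min δ 1 ≤ ∏' n, f n := by
  by_cases hf : Multipliable f
  · refine ge_of_tendsto hf.hasProd.tendsto_prod_nat ?_
    filter_upwards [eventually_ge_atTop N] with n hn
    obtain ⟨M, rfl⟩ := Nat.exists_eq_add_of_le hn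
    exact (min_le_left _ _).trans (h M)
  · rw [tprod_eq_one_of_not_multipliable hf]
    exact min_le_right _ _

theorem tendsto_log_div_log_of_le_of_le {α : Type*} {l : Filter α} {c g : α → ℝ} {a b : ℝ}
    (ha : 0 < a) (hg : Tendsto g l atTop) (hlow : ∀ᶠ x in l, a * g x ≤ c x)
    (hup : ∀ᶠ x in l, c x ≤ b * g x) :
    Tendsto (fun x => log (c x) / log (g x)) l (𝓝 1) := by
  have hlog : Tendsto (fun x => log (g x)) l atTop := tendsto_log_atTop.comp hg
  have hlim (K : ℝ) : Tendsto (fun x => 1 + K / log (g x)) l (𝓝 1) := by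
    simpa using tendsto_const_nhds.add (tendsto_const_nhds.div_atTop hlog)
  refine tendsto_of_tendsto_of_tendsto_of_le_of_le' (hlim (log a)) (hlim (log b)) ?_ ?_
  · filter_upwards [hlow, hg.eventually_gt_atTop 1] with x hx hgx
    have hL : 0 < log (g x) := log_pos hgx
    rw [one_add_div hL.ne', div_le_div_iff_of_pos_right hL, ← log_mul (by positivity) ha.ne']
    exact log_le_log (by positivity) (by linarith)
  · filter_upwards [hlow, hup, hg.eventually_gt_atTop 1] with x hx hx' hgx
    have hL : 0 < log (g x) := log_pos hgx
    have hb : 0 < b := pos_of_mul_pos_left (by nlinarith) (by linarith : (0:ℝ) ≤ g x)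
    rw [one_add_div hL.ne', div_le_div_iff_of_pos_right hL, ← log_mul (by positivity) hb.ne']
    exact log_le_log (by nlinarith) (by linarith)

theorem le_natCard_and_natCard_lt_add_one {S : Set ℕ} {y₁ y₂ : ℝ} (hy₂ : 0 ≤ y₂)
    (h₁ : ∀ n : ℕ, (n : ℝ) < y₁ → n ∈ S) (h₂ : ∀ n ∈ S, (n : ℝ) < y₂) :
    y₁ ≤ Nat.card S ∧ (Nat.card S : ℝ) < y₂ + 1 := by
  have hsub₁ : Set.Iio ⌈y₁⌉₊ ⊆ S := fun n hn => h₁ n (Nat.lt_ceil.1 hn)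
  have hsub₂ : S ⊆ Set.Iio ⌈y₂⌉₊ := fun n hn => Nat.lt_ceil.2 (h₂ n hn)
  have hfin : S.Finite := (Set.finite_Iio _).subset hsub₂
  have hcard (m : ℕ) : Nat.card (Set.Iio m) = m := by simp
  constructor
  · calc y₁ ≤ ⌈y₁⌉₊ := Nat.le_ceil y₁
      _ ≤ Nat.card S := by exact_mod_cast hcard _ ▸ Nat.card_mono hfin hsub₁
  · calc (Nat.card S : ℝ) ≤ ⌈y₂⌉₊ := by
          exact_mod_cast hcard _ ▸ Nat.card_mono (Set.finite_Iio _) hsub₂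
      _ < y₂ + 1 := Nat.ceil_lt_add_one hy₂

theorem logExpConv_eq_one_of_abs_log_norm_sub_le {ζ : ℕ → ℂ} {a b : ℝ} (ha : 0 < a)
    (hζ : ∀ n, ζ n ≠ 0) (h : ∀ n : ℕ, |log ‖ζ n‖ - a * n| ≤ b) : logExpConv ζ = 1 := by
  have hb : 0 ≤ b := (abs_nonneg _).trans (h 0)
  have hcount {r : ℝ} (hr : 0 < r) (hb' : 0 ≤ log r + b) :
      (log r - b) / a ≤ countFn ζ r ∧ (countFn ζ r : ℝ) < (log r + b) / a + 1 := by
    refine le_natCard_and_natCard_lt_add_one (by positivity) (fun n hn => ?_) (fun n hn => ?_)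
    · have hlog : log ‖ζ n‖ < log r := by
        rw [lt_div_iff₀ ha] at hn
        linarith [(abs_le.1 (h n)).2]
      exact (log_lt_log_iff (norm_pos_iff.2 (hζ n)) hr).1 hlog
    · have hlog : log ‖ζ n‖ < log r := log_lt_log (norm_pos_iff.2 (hζ n)) hn
      rw [lt_div_iff₀ ha]
      linarith [(abs_le.1 (h n)).1]
  have hlow : ∀ᶠ r in atTop, (2 * a)⁻¹ * log r ≤ countFn ζ r := by
    filter_upwards [eventually_gt_atTop 0, tendsto_log_atTop.eventually_ge_atTop (2 * b)]
      with r hr hlog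
    refine le_trans ?_ (hcount hr (by linarith)).1
    rw [le_div_iff₀ ha]
    field_simp
    linarith
  have hup : ∀ᶠ r in atTop, (countFn ζ r : ℝ) ≤ (2 / a) * log r := by
    filter_upwards [eventually_gt_atTop 0, tendsto_log_atTop.eventually_ge_atTop (a + b)]
      with r hr hlog
    refine (hcount hr (by linarith)).2.le.trans ?_
    rw [div_add_one ha.ne', div_mul_eq_mul_div, div_le_div_iff_of_pos_right ha]
    linarith
  have hlim := tendsto_log_div_log_of_le_of_le (by positivity) tendsto_log_atTop hlow hup
  simpa [logExpConv] using (EReal.tendsto_coe.2 hlim).limsup_eq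

-- `gap q j` is the paper's `ε_{j+1}`; `zetaSeq q (2 j)` and `zetaSeq q (2 j + 1)` are its
-- `z_{j+1}` and `w_{j+1}`.
noncomputable def gap (q : ℝ) (j : ℕ) : ℝ :=
  min (1 / 2) (2 ^ (j + 1) * exp (-(((j : ℝ) + 1) * log 2) ^ q))

noncomputable def zetaSeq (q : ℝ) (n : ℕ) : ℝ :=
  2 ^ (n / 2 + 1) + if n % 2 = 1 then gap q (n / 2) else 0

section ZetaSeq

variable {q : ℝ}

theorem gap_pos (j : ℕ) : 0 < gap q j :=
  lt_min (by norm_num) (by positivity)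

theorem gap_le_half (j : ℕ) : gap q j ≤ 1 / 2 :=
  min_le_left _ _

theorem half_le_exp_rpow_mul_gap (j : ℕ) :
    1 / 2 ≤ exp ((((j : ℝ) + 1) * log 2) ^ q) * gap q j := by
  have hL : 0 ≤ (((j : ℝ) + 1) * log 2) ^ q := by positivity
  rw [gap, mul_min_of_nonneg _ _ (exp_pos _).le, mul_left_comm, ← exp_add, add_neg_cancel,
    exp_zero, mul_one]
  refine le_min ?_ ?_
  · linarith [one_le_exp hL]
  · linarith [one_le_pow₀ (M₀ := ℝ) (a := 2) (n := j + 1) (by norm_num)]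

theorem zetaSeq_two_mul (j : ℕ) : zetaSeq q (2 * j) = 2 ^ (j + 1) := by
  simp [zetaSeq]

theorem zetaSeq_two_mul_add_one (j : ℕ) : zetaSeq q (2 * j + 1) = 2 ^ (j + 1) + gap q j := by
  simp [zetaSeq, show (2 * j + 1) / 2 = j by omega]

theorem two_pow_le_zetaSeq (n : ℕ) : 2 ^ (n / 2 + 1) ≤ zetaSeq q n := by
  unfold zetaSeq
  split_ifs
  · linarith [gap_pos (q := q) (n / 2)]
  · simp

theorem zetaSeq_le (n : ℕ) : zetaSeq q n ≤ 2 ^ (n / 2 + 1) + 1 / 2 := by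
  unfold zetaSeq
  split_ifs
  · linarith [gap_le_half (q := q) (n / 2)]
  · norm_num

theorem zetaSeq_pos (n : ℕ) : 0 < zetaSeq q n :=
  (by positivity : (0 : ℝ) < 2 ^ (n / 2 + 1)).trans_le (two_pow_le_zetaSeq n)

theorem zetaSeq_le_two_pow (n : ℕ) : zetaSeq q n ≤ 2 ^ (n / 2 + 2) := by
  have : (1 : ℝ) ≤ 2 ^ (n / 2 + 1) := one_le_pow₀ (by norm_num)
  linarith [zetaSeq_le (q := q) n, pow_succ (2 : ℝ) (n / 2 + 1)]

theorem abs_log_zetaSeq_sub_le (n : ℕ) : |log (zetaSeq q n) - log 2 / 2 * n| ≤ 2 * log 2 := by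
  have hlog2 : 0 < log 2 := log_pos (by norm_num)
  have hlow : ((n / 2 + 1 : ℕ) : ℝ) * log 2 ≤ log (zetaSeq q n) := by
    rw [← log_pow]
    exact log_le_log (by positivity) (by exact_mod_cast two_pow_le_zetaSeq n)
  have hup : log (zetaSeq q n) ≤ ((n / 2 + 2 : ℕ) : ℝ) * log 2 := by
    rw [← log_pow]
    exact log_le_log (zetaSeq_pos n) (by exact_mod_cast zetaSeq_le_two_pow n)
  have hdiv : (n : ℝ) / 2 - 1 / 2 ≤ ((n / 2 : ℕ) : ℝ) := by
    have : (n : ℝ) ≤ 2 * ((n / 2 : ℕ) : ℝ) + 1 := by exact_mod_cast (by omega : n ≤ 2 * (n / 2) + 1)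
    linarith
  have hdiv' : ((n / 2 : ℕ) : ℝ) ≤ (n : ℝ) / 2 := by
    have := Nat.cast_div_le (α := ℝ) (m := n) (n := 2)
    simpa using this
  push_cast at hlow hup
  rw [abs_le]
  constructor <;> nlinarith

theorem logExpConv_zetaSeq (q : ℝ) : logExpConv (fun n => (zetaSeq q n : ℂ)) = 1 := by
  refine logExpConv_eq_one_of_abs_log_norm_sub_le (a := log 2 / 2) (b := 2 * log 2)
    (by positivity) (fun n => by simpa using (zetaSeq_pos n).ne') fun n => ?_
  rw [Complex.norm_real, Real.norm_of_nonneg (zetaSeq_pos n).le]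
  exact abs_log_zetaSeq_sub_le n

end ZetaSeq

-- The `k`-th factor is set to `1`, so that the product over `n ≠ k` becomes one over `ℕ`.
noncomputable def factor (q : ℝ) (k n : ℕ) : ℝ :=
  if n = k then 1 else |1 - zetaSeq q k / zetaSeq q n|

section Factor

variable {q : ℝ} {k : ℕ}

theorem abs_one_sub_zetaSeq_div (k n : ℕ) :
    |1 - zetaSeq q k / zetaSeq q n| = |zetaSeq q n - zetaSeq q k| / zetaSeq q n := by
  rw [one_sub_div (zetaSeq_pos n).ne', abs_div, abs_of_pos (zetaSeq_pos n)]

theorem two_pow_div_four_le_factor {n : ℕ} (h : n / 2 < k / 2) :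
    2 ^ (k / 2 - n / 2) / 4 ≤ factor q k n := by
  have hnk : n ≠ k := by rintro rfl; omega
  set D : ℝ := 2 ^ (k / 2 - n / 2)
  set P : ℝ := 2 ^ (n / 2 + 1)
  have hD : 2 ≤ D := le_self_pow₀ (by norm_num) (by omega)
  have hP : 2 ≤ P := le_self_pow₀ (by norm_num) (by omega)
  have hk : D * P ≤ zetaSeq q k := by
    rw [← pow_add, show k / 2 - n / 2 + (n / 2 + 1) = k / 2 + 1 by omega]
    exact two_pow_le_zetaSeq k
  have hn := zetaSeq_le (q := q) n
  have hn₀ := zetaSeq_pos (q := q) n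
  rw [factor, if_neg hnk, abs_one_sub_zetaSeq_div, abs_of_nonpos (by nlinarith),
    le_div_iff₀ hn₀]
  nlinarith

theorem gap_div_le_factor_mul_factor :
    gap q (k / 2) / 2 ^ (k / 2 + 2) ≤
      factor q k (2 * (k / 2)) * factor q k (2 * (k / 2) + 1) := by
  set j := k / 2
  have hg := gap_pos (q := q) j
  have hP' : (2 : ℝ) ^ (j + 2) = 2 * 2 ^ (j + 1) := by ring
  rcases Nat.even_or_odd' k with ⟨i, rfl | rfl⟩
  · have hij : j = i := by omega
    rw [← hij, factor, factor, if_pos rfl, if_neg (by omega), one_mul,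
      abs_one_sub_zetaSeq_div, zetaSeq_two_mul, zetaSeq_two_mul_add_one, add_sub_cancel_left,
      abs_of_pos hg]
    gcongr
    linarith [gap_le_half (q := q) j, one_le_pow₀ (M₀ := ℝ) (a := 2) (n := j + 1) (by norm_num)]
  · have hij : j = i := by omega
    rw [← hij, factor, factor, if_neg (by omega), if_pos rfl, mul_one,
      abs_one_sub_zetaSeq_div, zetaSeq_two_mul, zetaSeq_two_mul_add_one, sub_add_cancel_left,
      abs_neg, abs_of_pos hg]
    gcongr <;> norm_num

theorem exp_le_factor {n : ℕ} (h : k / 2 < n / 2) :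
    exp (-(4 * (1 / 2) ^ (n / 2 - k / 2))) ≤ factor q k n := by
  have hnk : n ≠ k := by rintro rfl; omega
  set u : ℝ := (1 / 2) ^ (n / 2 - k / 2)
  have hu : u ≤ 1 / 2 := pow_le_of_le_one (by norm_num) (by norm_num) (by omega)
  have hu₀ : 0 < u := by positivity
  have hscale : u * 2 ^ (n / 2 + 1) = 2 ^ (k / 2 + 1) := by
    rw [show n / 2 + 1 = (n / 2 - k / 2) + (k / 2 + 1) by omega, pow_add, ← mul_assoc,
      ← mul_pow, one_div, inv_mul_cancel₀ two_ne_zero, one_pow, one_mul]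
  have hk := zetaSeq_le (q := q) k
  have hn := two_pow_le_zetaSeq (q := q) n
  have hk₁ : (2 : ℝ) ≤ 2 ^ (k / 2 + 1) := le_self_pow₀ (by norm_num) (by omega)
  set t := zetaSeq q k / zetaSeq q n with ht
  have hn₀ := zetaSeq_pos (q := q) n
  have htu : t ≤ 5 / 4 * u := by
    rw [ht, div_le_iff₀ hn₀]
    nlinarith [mul_le_mul_of_nonneg_left hn hu₀.le]
  have ht₀ : 0 ≤ t := div_nonneg (zetaSeq_pos k).le hn₀.le
  rw [factor, if_neg hnk, ← ht, abs_of_nonneg (by linarith)]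
  exact (exp_le_exp.2 (by linarith)).trans (exp_neg_three_mul_le_one_sub ht₀ (by linarith))

theorem factor_nonneg (k n : ℕ) : 0 ≤ factor q k n := by
  unfold factor
  split_ifs <;> positivity

theorem two_pow_div_le_prod_factor_below :
    (2 : ℝ) ^ (k / 2 * (k / 2 + 1)) / 2 ^ (4 * (k / 2)) ≤
      ∏ n ∈ range (2 * (k / 2)), factor q k n := by
  set j := k / 2
  have hsum : ∑ n ∈ range (2 * j), (j - n / 2) = j * (j + 1) := by
    rw [sum_range_two_mul_comp_div_two (fun i => j - i), smul_eq_mul, mul_comm,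
      sum_range_sub_mul_two]
  calc (2 : ℝ) ^ (j * (j + 1)) / 2 ^ (4 * j)
      = ∏ n ∈ range (2 * j), (2 : ℝ) ^ (j - n / 2) / 4 := by
        rw [prod_div_distrib, prod_pow_eq_pow_sum, hsum, prod_const, card_range,
          show (4 : ℝ) = 2 ^ 2 by norm_num, ← pow_mul]
        ring_nf
    _ ≤ ∏ n ∈ range (2 * j), factor q k n :=
        prod_le_prod (fun _ _ => by positivity) fun n hn =>
          two_pow_div_four_le_factor (by rw [mem_range] at hn; omega)

theorem exp_neg_eight_le_prod_factor_above (M : ℕ) :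
    exp (-8) ≤ ∏ i ∈ range M, factor q k (2 * (k / 2) + 2 + i) :=
  calc exp (-8) ≤ exp (-(2 * ∑ i ∈ range M, (1 / 2 : ℝ) ^ (i / 2))) :=
        exp_le_exp.2 (by linarith [sum_range_half_pow_div_two_le M])
    _ = ∏ i ∈ range M, exp (-(4 * (1 / 2) ^ ((2 * (k / 2) + 2 + i) / 2 - k / 2))) := by
        rw [← exp_sum, mul_sum, ← sum_neg_distrib]
        refine congrArg exp (sum_congr rfl fun i _ => ?_)
        rw [show (2 * (k / 2) + 2 + i) / 2 - k / 2 = i / 2 + 1 by omega, pow_succ]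
        ring
    _ ≤ ∏ i ∈ range M, factor q k (2 * (k / 2) + 2 + i) :=
        prod_le_prod (fun _ _ => (exp_pos _).le) fun _ _ => exp_le_factor (by omega)

theorem le_prod_range_factor (M : ℕ) :
    2 ^ (k / 2 * (k / 2 + 1)) / 2 ^ (4 * (k / 2)) * (gap q (k / 2) / 2 ^ (k / 2 + 2)) * exp (-8)
      ≤ ∏ n ∈ range (2 * (k / 2) + 2 + M), factor q k n := by
  rw [prod_range_add, prod_range_succ, prod_range_succ, mul_assoc (∏ n ∈ range _, _)]
  have hbelow := prod_nonneg fun n (_ : n ∈ range (2 * (k / 2))) => factor_nonneg (q := q) k n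
  exact mul_le_mul (mul_le_mul two_pow_div_le_prod_factor_below gap_div_le_factor_mul_factor
      (div_pos (gap_pos _) (by positivity)).le hbelow)
    (exp_neg_eight_le_prod_factor_above M) (exp_pos _).le
    (mul_nonneg hbelow (mul_nonneg (factor_nonneg k _) (factor_nonneg k _)))

theorem half_le_exp_log_rpow_mul_gap (hq : 0 ≤ q) (k : ℕ) :
    1 / 2 ≤ exp (log (1 + zetaSeq q k) ^ q) * gap q (k / 2) := by
  refine (half_le_exp_rpow_mul_gap (k / 2)).trans
    (mul_le_mul_of_nonneg_right (exp_le_exp.2 (rpow_le_rpow (by positivity) ?_ hq))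
      (gap_pos _).le)
  rw [← Nat.cast_add_one, ← log_pow]
  exact log_le_log (by positivity)
    (by linarith [two_pow_le_zetaSeq (q := q) k])

theorem tprod_norm_one_sub_div_mul_norm_weierE_zero (k : ℕ) :
    ∏' n : {n : ℕ // n ≠ k}, ‖1 - (zetaSeq q k : ℂ) / zetaSeq q n‖ *
      ‖weierE 0 ((zetaSeq q k : ℂ) / zetaSeq q n)‖ = ∏' n, factor q k n := by
  refine (tprod_congr fun n => ?_).trans
    ((tprod_subtype {n | n ≠ k} fun n => |1 - zetaSeq q k / zetaSeq q n|).trans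
      (tprod_congr fun n => ?_))
  · rw [weierE, sum_range_zero, Complex.exp_zero, norm_one, mul_one, ← Complex.ofReal_div,
      ← Complex.ofReal_one, ← Complex.ofReal_sub, Complex.norm_real, Real.norm_eq_abs]
  · by_cases hn : n = k <;> simp [Set.mulIndicator, factor, hn]

theorem exp_neg_eight_div_le_exp_log_rpow_mul (hq : 0 ≤ q) (k : ℕ) :
    exp (-8) / 128 ≤ exp (log (1 + zetaSeq q k) ^ q) *
      (2 ^ (k / 2 * (k / 2 + 1)) / 2 ^ (4 * (k / 2)) * (gap q (k / 2) / 2 ^ (k / 2 + 2)) *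
        exp (-8)) := by
  set j := k / 2
  set E := exp (log (1 + zetaSeq q k) ^ q)
  have hratio : 1 / 64 ≤ (2 : ℝ) ^ (j * (j + 1)) / (2 ^ (4 * j) * 2 ^ (j + 2)) := by
    rw [div_le_div_iff₀ (by norm_num) (by positivity), one_mul, ← pow_add,
      show (64 : ℝ) = 2 ^ 6 by norm_num, ← pow_add]
    exact pow_le_pow_right₀ (by norm_num) (by nlinarith [sq_nonneg ((j : ℤ) - 2)])
  have hgap : 1 / 2 ≤ E * gap q j := half_le_exp_log_rpow_mul_gap hq k
  calc exp (-8) / 128 = 1 / 2 * (1 / 64) * exp (-8) := by ring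
    _ ≤ E * gap q j * (2 ^ (j * (j + 1)) / (2 ^ (4 * j) * 2 ^ (j + 2))) * exp (-8) := by
        gcongr
    _ = _ := by ring

theorem unifLogQSep_zetaSeq (hq : 0 ≤ q) :
    UnifLogQSep (fun n => (zetaSeq q n : ℂ)) 0 q 1 := by
  refine ⟨exp (-8) / 128, by positivity, fun k => ?_⟩
  simp only [Complex.norm_real, Real.norm_of_nonneg (zetaSeq_pos k).le, one_mul]
  rw [tprod_norm_one_sub_div_mul_norm_weierE_zero]
  have hE : 1 ≤ exp (log (1 + zetaSeq q k) ^ q) :=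
    one_le_exp (rpow_nonneg (log_nonneg (by linarith [zetaSeq_pos (q := q) k])) q)
  calc exp (-8) / 128
      ≤ min (exp (log (1 + zetaSeq q k) ^ q) * _) (exp (log (1 + zetaSeq q k) ^ q)) :=
        le_min (exp_neg_eight_div_le_exp_log_rpow_mul hq k)
          (by linarith [exp_le_one_iff.2 (by norm_num : (-8 : ℝ) ≤ 0)])
    _ = exp (log (1 + zetaSeq q k) ^ q) * min _ 1 := by
        rw [mul_min_of_nonneg _ _ (exp_pos _).le, mul_one]
    _ ≤ exp (log (1 + zetaSeq q k) ^ q) * ∏' n, factor q k n :=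
        mul_le_mul_of_nonneg_left (min_le_tprod_of_le_prod_range le_prod_range_factor)
          (exp_pos _).le

end Factor

/-- Example 7.1: with z_n = 2^n, ε_n = min{1/2, 2^n exp(−(n log 2)^q)} and w_n = z_n + ε_n
(n ≥ 1), the combined sequence {z_n} ∪ {w_n} has logarithmic exponent of convergence one and
is uniformly logarithmically q-separated.  (The combined sequence is indexed from 0 by
ζ(2j) = 2^{j+1} and ζ(2j+1) = 2^{j+1} + ε_{j+1}.) -/
theorem stmt19 (q : ℝ) (hq : 0 < q) (ζ : ℕ → ℂ)
    (hζ1 : ∀ j : ℕ, ζ (2 * j) = (2 : ℂ) ^ (j + 1))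
    (hζ2 : ∀ j : ℕ, ζ (2 * j + 1) =
      (2 : ℂ) ^ (j + 1) +
        ((min (1 / 2 : ℝ)
          ((2 : ℝ) ^ (j + 1) * Real.exp (-(((j : ℝ) + 1) * Real.log 2) ^ q)) : ℝ) : ℂ)) :
    logExpConv ζ = (1 : EReal) ∧ ∃ C > (0:ℝ), UnifLogQSep ζ 0 q C := by
  have hζ : ζ = fun n => (zetaSeq q n : ℂ) := by
    funext n
    rcases Nat.even_or_odd' n with ⟨j, rfl | rfl⟩
    · rw [hζ1, zetaSeq_two_mul]
      push_cast
      rfl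
    · rw [hζ2, zetaSeq_two_mul_add_one, gap]
      push_cast
      rfl
  subst hζ
  exact ⟨logExpConv_zetaSeq q, 1, one_pos, unifLogQSep_zetaSeq hq.le⟩
end
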